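/- arXiv:2601.05281 — 2 statements merged into one kernel-verified Lean document; each statement's English description precedes it below -/
import Mathlib

section
/- Let $X$ be Gamma-distributed with shape $kL$ and scale $\theta_1 = \rho g + \sigma_0^2$, and let $Y$ be an independent Gamma random variable with shape $(q-k)L$ and scale $\theta_2 = \sigma_0^2$, where $0 < k < q$ are integers, $L$ a positive integer, and $\rho g, \sigma_0^2 > 0$. Then the density of $Z = X+Y$ at $z > 0$ equals $\frac{z^{qL-1} e^{-z/\sigma_0^2}}{\Gamma(qL)\,(\rho g+\sigma_0^2)^{kL}(\sigma_0^2)^{(q-k)L}}\, {}_1F_1\!\left(kL; qL; \frac{\rho g z}{\sigma_0^2(\rho g+\sigma_0^2)}\right)$, where ${}_1F_1$ is the Kummer confluent hypergeometric function. -/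
open MeasureTheory ProbabilityTheory Real Set Filter

/-- Upper regularized incomplete Gamma function `Q(a,x)`. -/
noncomputable def upperRegGamma (a x : ℝ) : ℝ :=
  (∫ t in Set.Ioi x, t ^ (a - 1) * Real.exp (-t)) / Real.Gamma a

/-- Lower regularized incomplete Gamma function `P(a,x)`. -/
noncomputable def lowerRegGamma (a x : ℝ) : ℝ :=
  (∫ t in Set.Ioc (0:ℝ) x, t ^ (a - 1) * Real.exp (-t)) / Real.Gamma a

/-- Pochhammer (rising factorial) symbol `(a)_n`. -/
noncomputable def poch (a : ℝ) (n : ℕ) : ℝ := Polynomial.eval a (ascPochhammer ℝ n)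

/-- Kummer confluent hypergeometric function `₁F₁(a;b;x)`. -/
noncomputable def kummerF (a b x : ℝ) : ℝ :=
  ∑' n : ℕ, poch a n / poch b n * x ^ n / (n.factorial : ℝ)

/-- Tricomi confluent hypergeometric function `U(a,b,z)` (integral representation). -/
noncomputable def tricomiU (a b z : ℝ) : ℝ :=
  (1 / Real.Gamma a) *
    ∫ t in Set.Ioi (0:ℝ), Real.exp (-(z * t)) * t ^ (a - 1) * (1 + t) ^ (b - a - 1)

/-- Gamma density with shape `α` and scale `θ`. -/
noncomputable def gammaDensity (α θ x : ℝ) : ℝ :=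
  x ^ (α - 1) * Real.exp (-x / θ) / (Real.Gamma α * θ ^ α)

/-- Exponential integral `E₁(x)`. -/
noncomputable def expInt (x : ℝ) : ℝ := ∫ t in Set.Ioi x, Real.exp (-t) / t

/-!
For integer shapes `m + 1` and `p + 1` the two exponentials in the convolution combine into
`exp (-z / θ₂) * exp (λ x)` with `λ = θ₂⁻¹ - θ₁⁻¹`, and the substitution `x = z t` leaves
`z ^ (m + p + 1) * ∫₀¹ t ^ m (1 - t) ^ p exp (λ z t) dt`. Expanding the exponential and integrating
termwise with the Beta integral `B(m + n + 1, p + 1) = (m + n)! p! / (m + n + p + 1)!` produces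
exactly the Kummer series: this is Euler's integral representation of `₁F₁(m + 1; m + p + 2; ·)`.
-/

open Nat

theorem integral_pow_mul_one_sub_pow (m p : ℕ) :
    ∫ x in (0:ℝ)..1, x ^ m * (1 - x) ^ p = (m ! * p ! / (m + p + 1)! : ℝ) := by
  have hB := Complex.Gamma_mul_Gamma_eq_betaIntegral
    (s := (m : ℂ) + 1) (t := (p : ℂ) + 1) (by simp; positivity) (by simp; positivity)
  have hint : Complex.betaIntegral ((m : ℂ) + 1) ((p : ℂ) + 1)
      = ((∫ x in (0:ℝ)..1, x ^ m * (1 - x) ^ p : ℝ) : ℂ) := by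
    rw [Complex.betaIntegral, ← intervalIntegral.integral_ofReal]
    refine intervalIntegral.integral_congr fun x _ => ?_
    push_cast
    rw [add_sub_cancel_right, add_sub_cancel_right, Complex.cpow_natCast, Complex.cpow_natCast]
  rw [hint, show (m : ℂ) + 1 + ((p : ℂ) + 1) = ((m + p + 1 : ℕ) : ℂ) + 1 by push_cast; ring,
    Complex.Gamma_nat_eq_factorial, Complex.Gamma_nat_eq_factorial,
    Complex.Gamma_nat_eq_factorial] at hB
  have hfac : ((m + p + 1)! : ℝ) ≠ 0 := by positivity
  rw [eq_div_iff hfac, mul_comm]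
  exact_mod_cast hB.symm

theorem poch_natCast_add_one (m n : ℕ) : poch ((m : ℝ) + 1) n = ((m + n)! / m ! : ℝ) := by
  rw [poch, ← Nat.cast_succ, ← ascPochhammer_eval_cast, ascPochhammer_nat_eq_ascFactorial,
    eq_div_iff (by positivity), mul_comm]
  exact_mod_cast Nat.factorial_mul_ascFactorial m n

theorem hasSum_integral_pow_mul_one_sub_pow_mul_exp (m p : ℕ) (c : ℝ) :
    HasSum (fun n => c ^ n / n ! * ((m + n)! * p ! / (m + n + p + 1)! : ℝ))
      (∫ t in (0:ℝ)..1, t ^ m * (1 - t) ^ p * exp (c * t)) := by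
  have hterm : ∀ n : ℕ, c ^ n / n ! * ((m + n)! * p ! / (m + n + p + 1)! : ℝ)
      = ∫ t in (0:ℝ)..1, c ^ n / n ! * (t ^ (m + n) * (1 - t) ^ p) := by
    intro n
    rw [intervalIntegral.integral_const_mul, integral_pow_mul_one_sub_pow]
  simp_rw [hterm]
  refine intervalIntegral.hasSum_integral_of_dominated_convergence (fun n _ => |c| ^ n / n !)
    (fun n => by fun_prop) (fun n => ae_of_all _ fun t ht => ?_)
    (ae_of_all _ fun _ _ => Real.summable_pow_div_factorial |c|) intervalIntegrable_const
    (ae_of_all _ fun t _ => ?_)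
  · rw [uIoc_of_le zero_le_one] at ht
    have h1t : 0 ≤ 1 - t := by linarith [ht.2]
    have hpow : t ^ (m + n) * (1 - t) ^ p ≤ 1 :=
      mul_le_one₀ (pow_le_one₀ ht.1.le ht.2) (by positivity) (pow_le_one₀ h1t (by linarith [ht.1]))
    rw [norm_mul, Real.norm_eq_abs, Real.norm_eq_abs, abs_div, abs_pow, Nat.abs_cast,
      abs_of_nonneg (mul_nonneg (pow_nonneg ht.1.le _) (pow_nonneg h1t _))]
    exact mul_le_of_le_one_right (by positivity) hpow
  · have hexp := (NormedSpace.expSeries_div_hasSum_exp (c * t)).mul_left (t ^ m * (1 - t) ^ p)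
    rw [← Real.exp_eq_exp_ℝ] at hexp
    exact hexp.congr_fun fun n => by ring

theorem kummerF_natCast_add_one_eq_integral (m p : ℕ) (x : ℝ) :
    kummerF ((m : ℝ) + 1) ((m : ℝ) + p + 2) x
      = (m + p + 1)! / (m ! * p !) * ∫ t in (0:ℝ)..1, t ^ m * (1 - t) ^ p * exp (x * t) := by
  rw [kummerF, ← (hasSum_integral_pow_mul_one_sub_pow_mul_exp m p x).tsum_eq, ← tsum_mul_left]
  refine tsum_congr fun n => ?_
  rw [show (m : ℝ) + p + 2 = ((m + p + 1 : ℕ) : ℝ) + 1 by push_cast; ring,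
    poch_natCast_add_one, poch_natCast_add_one, show m + p + 1 + n = m + n + p + 1 by ring]
  field_simp

theorem integral_pow_mul_sub_pow_mul_exp (m p : ℕ) (z c : ℝ) :
    ∫ x in (0:ℝ)..z, x ^ m * (z - x) ^ p * exp (c * x)
      = z ^ (m + p + 1) * ∫ t in (0:ℝ)..1, t ^ m * (1 - t) ^ p * exp (c * z * t) := by
  have h := intervalIntegral.smul_integral_comp_mul_left
    (fun x => x ^ m * (z - x) ^ p * exp (c * x)) z (a := 0) (b := 1)
  simp only [mul_zero, mul_one, smul_eq_mul] at h
  rw [← h]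
  have hscale : ∀ t : ℝ, (z * t) ^ m * (z - z * t) ^ p * exp (c * (z * t))
      = z ^ m * z ^ p * (t ^ m * (1 - t) ^ p * exp (c * z * t)) := by
    intro t
    rw [show z - z * t = z * (1 - t) by ring, mul_pow, mul_pow, ← mul_assoc c]
    ring
  simp_rw [hscale, intervalIntegral.integral_const_mul]
  ring

theorem gammaDensity_natCast_add_one (n : ℕ) (θ x : ℝ) :
    gammaDensity ((n : ℝ) + 1) θ x = x ^ n * exp (-x / θ) / (n ! * θ ^ (n + 1)) := by
  rw [gammaDensity, add_sub_cancel_right, Real.rpow_natCast, Real.Gamma_nat_eq_factorial,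
    ← Nat.cast_succ, Real.rpow_natCast]

theorem integral_gammaDensity_mul_gammaDensity_sub (m p : ℕ) (θ₁ θ₂ z : ℝ) :
    ∫ x in (0:ℝ)..z, gammaDensity ((m : ℝ) + 1) θ₁ x * gammaDensity ((p : ℝ) + 1) θ₂ (z - x)
      = z ^ (m + p + 1) * exp (-z / θ₂) / ((m + p + 1)! * θ₁ ^ (m + 1) * θ₂ ^ (p + 1)) *
          kummerF ((m : ℝ) + 1) ((m : ℝ) + p + 2) ((θ₂⁻¹ - θ₁⁻¹) * z) := by
  have hexp : ∀ x, exp (-x / θ₁) * exp (-(z - x) / θ₂) = exp (-z / θ₂) * exp ((θ₂⁻¹ - θ₁⁻¹) * x) :=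
    fun x => by rw [← exp_add, ← exp_add]; ring_nf
  have hintegrand : ∀ x, gammaDensity ((m : ℝ) + 1) θ₁ x * gammaDensity ((p : ℝ) + 1) θ₂ (z - x)
      = exp (-z / θ₂) / (m ! * θ₁ ^ (m + 1) * (p ! * θ₂ ^ (p + 1))) *
          (x ^ m * (z - x) ^ p * exp ((θ₂⁻¹ - θ₁⁻¹) * x)) := by
    intro x
    rw [gammaDensity_natCast_add_one, gammaDensity_natCast_add_one]
    linear_combination x ^ m * (z - x) ^ p / (m ! * θ₁ ^ (m + 1) * (p ! * θ₂ ^ (p + 1))) * hexp x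
  simp_rw [hintegrand]
  rw [intervalIntegral.integral_const_mul, integral_pow_mul_sub_pow_mul_exp,
    kummerF_natCast_add_one_eq_integral]
  -- frozen as an atom so that `field_simp` leaves the exponent under the binder untouched
  set I := ∫ t in (0:ℝ)..1, t ^ m * (1 - t) ^ p * exp ((θ₂⁻¹ - θ₁⁻¹) * z * t)
  field_simp

theorem stmt_1_general (k q L : ℕ) (hk : 0 < k) (hkq : k < q) (hL : 0 < L)
    (ρg σ0sq : ℝ) (hρg : 0 < ρg) (hσ : 0 < σ0sq) (z : ℝ) :
    ∫ x in (0:ℝ)..z,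
        gammaDensity ((k : ℝ) * L) (ρg + σ0sq) x *
          gammaDensity (((q : ℝ) - k) * L) σ0sq (z - x) =
      z ^ ((q : ℝ) * L - 1) * Real.exp (-z / σ0sq) /
          (Real.Gamma ((q : ℝ) * L) * (ρg + σ0sq) ^ ((k : ℝ) * L) *
            σ0sq ^ (((q : ℝ) - k) * L)) *
        kummerF ((k : ℝ) * L) ((q : ℝ) * L) (ρg * z / (σ0sq * (ρg + σ0sq))) := by
  obtain ⟨m, hm⟩ := Nat.exists_eq_add_one_of_ne_zero (Nat.mul_pos hk hL).ne'
  obtain ⟨p, hp⟩ := Nat.exists_eq_add_one_of_ne_zero (Nat.mul_pos (Nat.sub_pos_of_lt hkq) hL).ne'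
  have hA : (k : ℝ) * L = m + 1 := by exact_mod_cast hm
  have hB : ((q : ℝ) - k) * L = p + 1 := by rw [← Nat.cast_sub hkq.le]; exact_mod_cast hp
  have hQ : (q : ℝ) * L = m + p + 2 := by linear_combination hA + hB
  have hc : ρg * z / (σ0sq * (ρg + σ0sq)) = (σ0sq⁻¹ - (ρg + σ0sq)⁻¹) * z := by
    field_simp
    ring
  have hz : z ^ ((m : ℝ) + p + 2 - 1) = z ^ (m + p + 1) := by
    rw [show (m : ℝ) + p + 2 - 1 = ((m + p + 1 : ℕ) : ℝ) by push_cast; ring, Real.rpow_natCast]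
  have hΓ : Gamma ((m : ℝ) + p + 2) = (m + p + 1)! := by
    rw [show (m : ℝ) + p + 2 = ((m + p + 1 : ℕ) : ℝ) + 1 by push_cast; ring,
      Real.Gamma_nat_eq_factorial]
  have hθ₁ : (ρg + σ0sq) ^ ((m : ℝ) + 1) = (ρg + σ0sq) ^ (m + 1) := by norm_cast
  have hθ₂ : σ0sq ^ ((p : ℝ) + 1) = σ0sq ^ (p + 1) := by norm_cast
  rw [hA, hB, hQ, hc, hz, hΓ, hθ₁, hθ₂]
  exact integral_gammaDensity_mul_gammaDensity_sub m p _ _ z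

theorem stmt_1 (k q L : ℕ) (hk : 0 < k) (hkq : k < q) (hL : 0 < L)
    (ρg σ0sq : ℝ) (hρg : 0 < ρg) (hσ : 0 < σ0sq) (z : ℝ) (hz : 0 < z) :
    ∫ x in (0:ℝ)..z,
        gammaDensity ((k : ℝ) * L) (ρg + σ0sq) x *
          gammaDensity (((q : ℝ) - k) * L) σ0sq (z - x) =
      z ^ ((q : ℝ) * L - 1) * Real.exp (-z / σ0sq) /
          (Real.Gamma ((q : ℝ) * L) * (ρg + σ0sq) ^ ((k : ℝ) * L) *
            σ0sq ^ (((q : ℝ) - k) * L)) *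
        kummerF ((k : ℝ) * L) ((q : ℝ) * L) (ρg * z / (σ0sq * (ρg + σ0sq))) :=
  stmt_1_general k q L hk hkq hL ρg σ0sq hρg hσ z
end

section
/- Let $G$ be exponentially distributed with mean $\omega_e > 0$, and let $\rho, \sigma_0^2, \gamma_e > 0$, and let $k, L, q$ be positive integers with $k \le q$. Then $\mathbb{E}_G\!\left[\left(\frac{\sigma_0^2}{\rho G+\sigma_0^2}\right)^{kL} \sum_{n=0}^\infty \frac{(kL)_n}{n!}\left(\frac{\rho G}{\rho G+\sigma_0^2}\right)^n P\!\left(qL+n,\frac{\gamma_e}{\sigma_0^2}\right)\right] = \frac{\sigma_0^2}{\rho\omega_e}\sum_{n=0}^\infty (kL)_n\, U\!\left(n+1, 2-kL, \frac{\sigma_0^2}{\rho\omega_e}\right) P\!\left(qL+n, \frac{\gamma_e}{\sigma_0^2}\right)$. -/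
/-!
Expand the integrand as a power series in `x = ρg/(ρg+σ₀²) ∈ [0,1)`. Its `n`-th term is bounded by
`(kL)_n/n! · P(qL+n, γ/σ₀²)` times the exponential density, and these coefficients are summable
since `(kL)_n/n! ≤ (kL+1)^n` and `P(qL+n, c) ≤ c^(qL+n)/(Γ(qL+1) n!)` make them dominated by an
exponential series; so integral and sum may be swapped.
After the substitution `g = (σ₀²/ρ) t` the `n`-th integral is the integral representation of
`n! · U(n+1, 2-kL, σ₀²/(ρω))`, up to the factor `σ₀²/(ρω)`.
-/

open MeasureTheory ProbabilityTheory Real Set Filter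

theorem integral_tsum_of_norm_le_mul {α E ι : Type*} [MeasurableSpace α] [NormedAddCommGroup E]
    [NormedSpace ℝ E] [Countable ι] {μ : Measure α} {f : ι → α → E} {b : ι → ℝ} {w : α → ℝ}
    (hf : ∀ i, AEStronglyMeasurable (f i) μ) (hw : Integrable w μ) (hb : Summable b)
    (hfb : ∀ i, ∀ᵐ a ∂μ, ‖f i a‖ ≤ b i * w a) :
    ∫ a, ∑' i, f i a ∂μ = ∑' i, ∫ a, f i a ∂μ := by
  have hint : ∀ i, Integrable (f i) μ := fun i => (hw.const_mul (b i)).mono' (hf i) (hfb i)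
  refine (integral_tsum_of_summable_integral_norm hint ?_).symm
  refine Summable.of_nonneg_of_le (fun i => integral_nonneg fun a => norm_nonneg _) (fun i => ?_)
    (hb.mul_right (∫ a, w a ∂μ))
  calc ∫ a, ‖f i a‖ ∂μ ≤ ∫ a, b i * w a ∂μ :=
        integral_mono_ae (hint i).norm (hw.const_mul _) (hfb i)
    _ = b i * ∫ a, w a ∂μ := integral_const_mul _ _

section Pochhammer

variable {M : ℝ}

lemma poch_nonneg (hM : 0 ≤ M) (n : ℕ) : 0 ≤ poch M n := by
  induction n with
  | zero => simp [poch]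
  | succ n ih => rw [poch, ascPochhammer_succ_eval]; exact mul_nonneg ih (by positivity)

lemma poch_le_add_one_pow_mul_factorial (hM : 0 ≤ M) (n : ℕ) :
    poch M n ≤ (M + 1) ^ n * n.factorial := by
  induction n with
  | zero => simp [poch]
  | succ n ih =>
    rw [poch, ascPochhammer_succ_eval, ← poch, pow_succ, Nat.factorial_succ, Nat.cast_mul]
    have hfac : M + n ≤ (M + 1) * (n + 1) := by nlinarith [n.cast_nonneg (α := ℝ)]
    calc poch M n * (M + n) ≤ ((M + 1) ^ n * n.factorial) * ((M + 1) * (n + 1)) :=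
          mul_le_mul ih hfac (by positivity) (by positivity)
      _ = _ := by push_cast; ring

end Pochhammer

lemma Gamma_add_one_mul_factorial_le {A : ℝ} (hA : 0 ≤ A) (n : ℕ) :
    Real.Gamma (A + 1) * n.factorial ≤ Real.Gamma (A + n + 1) := by
  induction n with
  | zero => simp
  | succ n ih =>
    have hpos : A + n + 1 ≠ 0 := by positivity
    rw [Nat.factorial_succ, Nat.cast_mul, Nat.cast_succ, ← add_assoc, Real.Gamma_add_one hpos]
    calc Real.Gamma (A + 1) * ((n + 1) * n.factorial)
        = (n + 1) * (Real.Gamma (A + 1) * n.factorial) := by ring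
      _ ≤ (A + n + 1) * Real.Gamma (A + n + 1) :=
          mul_le_mul (by linarith) ih (by positivity) (by positivity)

section LowerRegGamma

variable {a x : ℝ}

lemma lowerRegGamma_nonneg (ha : 0 ≤ a) (x : ℝ) : 0 ≤ lowerRegGamma a x :=
  div_nonneg (setIntegral_nonneg measurableSet_Ioc fun _ ht =>
    mul_nonneg (Real.rpow_nonneg ht.1.le _) (Real.exp_pos _).le) (Real.Gamma_nonneg_of_nonneg ha)

lemma lowerRegGamma_le (ha : 0 < a) (hx : 0 ≤ x) :
    lowerRegGamma a x ≤ x ^ a / Real.Gamma (a + 1) := by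
  have hpow : IntegrableOn (fun t : ℝ => t ^ (a - 1)) (Ioc 0 x) :=
    (intervalIntegrable_iff_integrableOn_Ioc_of_le hx).mp
      (intervalIntegral.intervalIntegrable_rpow' (by linarith))
  have hle : ∀ t ∈ Ioc (0 : ℝ) x, t ^ (a - 1) * Real.exp (-t) ≤ t ^ (a - 1) := fun t ht =>
    mul_le_of_le_one_right (Real.rpow_nonneg ht.1.le _)
      (Real.exp_le_one_iff.mpr (by linarith [ht.1]))
  have hint : IntegrableOn (fun t : ℝ => t ^ (a - 1) * Real.exp (-t)) (Ioc 0 x) := by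
    have hexp : Continuous fun t : ℝ => Real.exp (-t) := by fun_prop
    refine hpow.mono' (hpow.1.mul hexp.aestronglyMeasurable) ?_
    refine (ae_restrict_iff' measurableSet_Ioc).mpr (Eventually.of_forall fun t ht => ?_)
    rw [Real.norm_of_nonneg (mul_nonneg (Real.rpow_nonneg ht.1.le _) (Real.exp_pos _).le)]
    exact hle t ht
  have hpow_integral : ∫ t in Ioc (0 : ℝ) x, t ^ (a - 1) = x ^ a / a := by
    rw [← intervalIntegral.integral_of_le hx, integral_rpow (Or.inl (by linarith)),
      sub_add_cancel, Real.zero_rpow ha.ne', sub_zero]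
  rw [lowerRegGamma, Real.Gamma_add_one ha.ne', ← div_div, ← hpow_integral]
  exact div_le_div_of_nonneg_right (setIntegral_mono_on hint hpow measurableSet_Ioc hle)
    (Real.Gamma_nonneg_of_nonneg ha.le)

end LowerRegGamma

theorem summable_poch_div_factorial_mul_lowerRegGamma {M A c : ℝ} (hM : 0 ≤ M) (hA : 0 < A)
    (hc : 0 ≤ c) :
    Summable fun n : ℕ => poch M n / n.factorial * lowerRegGamma (A + n) c := by
  have hfac (n : ℕ) : (0 : ℝ) < n.factorial := by exact_mod_cast n.factorial_pos
  refine Summable.of_nonneg_of_le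
    (fun n => mul_nonneg (div_nonneg (poch_nonneg hM n) (hfac n).le)
      (lowerRegGamma_nonneg (by positivity) c))
    (fun n => ?_)
    ((Real.summable_pow_div_factorial ((M + 1) * c)).mul_left (c ^ A / Real.Gamma (A + 1)))
  calc poch M n / n.factorial * lowerRegGamma (A + n) c
      ≤ (M + 1) ^ n * (c ^ (A + n) / (Real.Gamma (A + 1) * n.factorial)) := by
        refine mul_le_mul ((div_le_iff₀ (hfac n)).mpr (poch_le_add_one_pow_mul_factorial hM n))
          ((lowerRegGamma_le (by positivity) hc).trans
            (div_le_div_of_nonneg_left (by positivity) (by positivity)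
              (Gamma_add_one_mul_factorial_le hA.le n)))
          (lowerRegGamma_nonneg (by positivity) c) (by positivity)
    _ = c ^ A / Real.Gamma (A + 1) * (((M + 1) * c) ^ n / n.factorial) := by
        rw [Real.rpow_add_natCast' hc (by positivity), mul_pow]
        field_simp

lemma tricomiU_natCast_add_one (n : ℕ) (b z : ℝ) :
    tricomiU (n + 1) b z =
      (∫ t in Ioi (0 : ℝ), Real.exp (-(z * t)) * t ^ n * (1 + t) ^ (b - n - 2)) / n.factorial := by
  have hintegrand (t : ℝ) :
      Real.exp (-(z * t)) * t ^ ((n : ℝ) + 1 - 1) * (1 + t) ^ (b - (n + 1) - 1) =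
        Real.exp (-(z * t)) * t ^ n * (1 + t) ^ (b - n - 2) := by
    rw [add_sub_cancel_right, Real.rpow_natCast, show b - (n + 1) - 1 = b - n - 2 by ring]
  rw [tricomiU, Real.Gamma_nat_eq_factorial]
  simp_rw [hintegrand]
  ring

section ExponentialMixture

variable {ω ρ σ : ℝ}

-- The exponent `2 - M - n - 2` is the `b - n - 2` of `tricomiU_natCast_add_one` at `b = 2 - M`.
lemma ratio_rpow_mul_pow_scaled_eq (hρ : 0 < ρ) (hσ : 0 < σ) (M : ℝ) (n : ℕ) {t : ℝ}
    (ht : 0 ≤ t) :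
    (σ / (ρ * (σ / ρ * t) + σ)) ^ M * (ρ * (σ / ρ * t) / (ρ * (σ / ρ * t) + σ)) ^ n =
      t ^ n * (1 + t) ^ (2 - M - n - 2) := by
  have h1t : 0 < 1 + t := by linarith
  have hden : ρ * (σ / ρ * t) + σ = σ * (1 + t) := by field_simp; ring
  have hnum : ρ * (σ / ρ * t) = σ * t := by field_simp
  rw [hden, hnum, mul_div_mul_left _ _ hσ.ne', div_mul_cancel_left₀ hσ.ne', div_pow,
    Real.inv_rpow h1t.le, ← Real.rpow_neg h1t.le, ← Real.rpow_natCast (1 + t),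
    show 2 - M - n - 2 = -M - n by ring, Real.rpow_sub h1t]
  ring

theorem integral_exponentialDensity_mul_ratio_pow_eq_tricomiU (hω : 0 < ω) (hρ : 0 < ρ) (hσ : 0 < σ)
    (M : ℝ) (n : ℕ) :
    ∫ g in Ioi (0 : ℝ), 1 / ω * Real.exp (-g / ω) *
        ((σ / (ρ * g + σ)) ^ M * (ρ * g / (ρ * g + σ)) ^ n) =
      σ / (ρ * ω) * n.factorial * tricomiU (n + 1) (2 - M) (σ / (ρ * ω)) := by
  set F : ℝ → ℝ := fun g => 1 / ω * Real.exp (-g / ω) *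
    ((σ / (ρ * g + σ)) ^ M * (ρ * g / (ρ * g + σ)) ^ n)
  have hscale : 0 < σ / ρ := div_pos hσ hρ
  have hF (t : ℝ) (ht : t ∈ Ioi 0) : F (σ / ρ * t) =
      1 / ω * (Real.exp (-(σ / (ρ * ω) * t)) * t ^ n * (1 + t) ^ (2 - M - n - 2)) := by
    simp only [F, mul_assoc, ratio_rpow_mul_pow_scaled_eq hρ hσ M n (le_of_lt ht)]
    congr 3
    field_simp
  calc ∫ g in Ioi (0 : ℝ), F g = σ / ρ * ∫ t in Ioi (0 : ℝ), F (σ / ρ * t) := by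
        rw [integral_comp_mul_left_Ioi F 0 hscale, mul_zero, smul_eq_mul,
          mul_inv_cancel_left₀ hscale.ne']
    _ = _ := by
        rw [setIntegral_congr_fun measurableSet_Ioi hF, integral_const_mul,
          tricomiU_natCast_add_one]
        field_simp

lemma integrableOn_exponentialDensity (hω : 0 < ω) (a : ℝ) :
    IntegrableOn (fun g : ℝ => 1 / ω * Real.exp (-g / ω)) (Ioi a) := by
  have h := ((exp_neg_integrableOn_Ioi a (inv_pos.mpr hω)).const_mul (1 / ω))
  simpa only [IntegrableOn, neg_mul, ← div_eq_inv_mul, neg_div] using h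

lemma norm_ratio_rpow_mul_pow_le_one {M : ℝ} (hρ : 0 < ρ) (hσ : 0 < σ) (hM : 0 ≤ M)
    (n : ℕ) {g : ℝ} (hg : 0 ≤ g) :
    ‖(σ / (ρ * g + σ)) ^ M * (ρ * g / (ρ * g + σ)) ^ n‖ ≤ 1 := by
  have hden : 0 < ρ * g + σ := by positivity
  have hs : σ / (ρ * g + σ) ≤ 1 := (div_le_one hden).mpr (by nlinarith)
  have hx : ρ * g / (ρ * g + σ) ≤ 1 := (div_le_one hden).mpr (by linarith)
  rw [Real.norm_of_nonneg (by positivity)]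
  exact mul_le_one₀ (Real.rpow_le_one (by positivity) hs hM) (by positivity)
    (pow_le_one₀ (by positivity) hx)

theorem integral_exponentialDensity_mul_tsum {M : ℝ} {a : ℕ → ℝ} (hω : 0 < ω) (hρ : 0 < ρ)
    (hσ : 0 < σ) (hM : 0 ≤ M) (ha : Summable fun n => ‖a n‖) :
    ∫ g in Ioi (0 : ℝ), 1 / ω * Real.exp (-g / ω) *
        ((σ / (ρ * g + σ)) ^ M * ∑' n, a n * (ρ * g / (ρ * g + σ)) ^ n) =
      σ / (ρ * ω) * ∑' n, a n * n.factorial * tricomiU (n + 1) (2 - M) (σ / (ρ * ω)) := by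
  have hseries (g : ℝ) : 1 / ω * Real.exp (-g / ω) *
      ((σ / (ρ * g + σ)) ^ M * ∑' n, a n * (ρ * g / (ρ * g + σ)) ^ n) =
      ∑' n, a n * (1 / ω * Real.exp (-g / ω) *
        ((σ / (ρ * g + σ)) ^ M * (ρ * g / (ρ * g + σ)) ^ n)) := by
    rw [← tsum_mul_left, ← tsum_mul_left]
    exact tsum_congr fun n => by ring
  have hbound (n : ℕ) : ∀ᵐ g ∂(volume.restrict (Ioi 0)),
      ‖a n * (1 / ω * Real.exp (-g / ω) * ((σ / (ρ * g + σ)) ^ M * (ρ * g / (ρ * g + σ)) ^ n))‖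
        ≤ ‖a n‖ * (1 / ω * Real.exp (-g / ω)) := by
    refine (ae_restrict_iff' measurableSet_Ioi).mpr (Eventually.of_forall fun g hg => ?_)
    have hdensity : 0 ≤ 1 / ω * Real.exp (-g / ω) := by positivity
    rw [norm_mul, norm_mul (1 / ω * _), Real.norm_of_nonneg hdensity, ← mul_assoc]
    exact mul_le_of_le_one_right (by positivity)
      (norm_ratio_rpow_mul_pow_le_one hρ hσ hM n (le_of_lt hg))
  simp_rw [hseries]
  rw [integral_tsum_of_norm_le_mul (fun n => Measurable.aestronglyMeasurable (by fun_prop))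
    (integrableOn_exponentialDensity hω 0) ha hbound]
  simp only [integral_const_mul, integral_exponentialDensity_mul_ratio_pow_eq_tricomiU hω hρ hσ]
  rw [← tsum_mul_left]
  exact tsum_congr fun n => by ring

end ExponentialMixture

theorem stmt_4_general (ωe ρ σ0sq γe : ℝ) (hω : 0 < ωe) (hρ : 0 < ρ) (hσ : 0 < σ0sq)
    (hγ : 0 < γe) (k L q : ℕ) (hL : 0 < L) (hq : 0 < q) :
    ∫ g in Set.Ioi (0:ℝ),
        (1 / ωe) * Real.exp (-g / ωe) *
          ((σ0sq / (ρ * g + σ0sq)) ^ ((k : ℝ) * L) *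
            ∑' n : ℕ, poch ((k : ℝ) * L) n / (n.factorial : ℝ) *
              (ρ * g / (ρ * g + σ0sq)) ^ n *
                lowerRegGamma ((q : ℝ) * L + n) (γe / σ0sq)) =
      σ0sq / (ρ * ωe) *
        ∑' n : ℕ, poch ((k : ℝ) * L) n *
          tricomiU ((n : ℝ) + 1) (2 - (k : ℝ) * L) (σ0sq / (ρ * ωe)) *
            lowerRegGamma ((q : ℝ) * L + n) (γe / σ0sq) := by
  have hcoeff := summable_poch_div_factorial_mul_lowerRegGamma (M := (k : ℝ) * L)
    (A := (q : ℝ) * L) (c := γe / σ0sq) (by positivity) (by positivity) (by positivity)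
  simp only [mul_right_comm _ (_ ^ (_ : ℕ)) (lowerRegGamma _ _)]
  rw [integral_exponentialDensity_mul_tsum hω hρ hσ (by positivity) (summable_norm_iff.mpr hcoeff)]
  congr 1
  exact tsum_congr fun n => by field_simp

theorem stmt_4 (ωe ρ σ0sq γe : ℝ) (hω : 0 < ωe) (hρ : 0 < ρ) (hσ : 0 < σ0sq)
    (hγ : 0 < γe) (k L q : ℕ) (hk : 0 < k) (hL : 0 < L) (hq : 0 < q) (hkq : k ≤ q) :
    ∫ g in Set.Ioi (0:ℝ),
        (1 / ωe) * Real.exp (-g / ωe) *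
          ((σ0sq / (ρ * g + σ0sq)) ^ ((k : ℝ) * L) *
            ∑' n : ℕ, poch ((k : ℝ) * L) n / (n.factorial : ℝ) *
              (ρ * g / (ρ * g + σ0sq)) ^ n *
                lowerRegGamma ((q : ℝ) * L + n) (γe / σ0sq)) =
      σ0sq / (ρ * ωe) *
        ∑' n : ℕ, poch ((k : ℝ) * L) n *
          tricomiU ((n : ℝ) + 1) (2 - (k : ℝ) * L) (σ0sq / (ρ * ωe)) *
            lowerRegGamma ((q : ℝ) * L + n) (γe / σ0sq) :=
  stmt_4_general ωe ρ σ0sq γe hω hρ hσ hγ k L q hL hq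
end
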